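/- arXiv:math/0102045 — 5 statements merged into one kernel-verified Lean document; each statement's English description precedes it below -/
import Mathlib

section
/- If I is an ideal over a set A with non(I) = cof(I), then every I-positive subset X of A can be partitioned into non(I) many pairwise disjoint I-positive sets. -/
open Cardinal Set

/-- `non(I)`: the least cardinality of an `I`-positive subset of `A`. -/
noncomputable def idealNon {A : Type*} (I : Set (Set A)) : Cardinal :=
  sInf {c | ∃ X : Set A, X ∉ I ∧ #X = c}

/-- `cof(I)`: the least cardinality of a subfamily of `I` cofinal in `I` under inclusion. -/
noncomputable def idealCof {A : Type*} (I : Set (Set A)) : Cardinal :=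
  sInf {c | ∃ J : Set (Set A), J ⊆ I ∧ #J = c ∧ ∀ X ∈ I, ∃ Y ∈ J, X ⊆ Y}

/-!
Let `κ = non(I)`; it is infinite, and there is a cofinal `J ⊆ I` of size `κ`. For `Y ∈ J` the
set `X \ Y` is positive, so it has at least `κ = |κ × J|` points, and a transfinite greedy
choice gives distinct points `x (i, Y) ∈ X \ Y` for `(i, Y) ∈ κ × J`. For each `i` the set
`Z i = {x (i, Y) | Y ∈ J}` lies in no member of `J`, hence in no member of `I`. The `Z i` are
pairwise disjoint positive subsets of `X`; adding the rest of `X` to one of them gives the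
partition.
-/

universe u v

open Function

section DistinctRepresentatives

variable {ι : Type u} {A : Type v}

theorem exists_injective_forall_mem_of_lift_mk_Iio_lt [LinearOrder ι] [WellFoundedLT ι]
    (S : ι → Set A) (hS : ∀ i, lift.{v} #(Iio i) < lift.{u} #(S i)) :
    ∃ f : ι → A, Injective f ∧ ∀ i, f i ∈ S i := by
  have hfresh : ∀ i (g : Iio i → A), (S i \ range g).Nonempty := by
    intro i g
    rw [nonempty_iff_ne_empty, Ne, sdiff_eq_empty]
    exact fun hsub => (hS i).not_ge ((lift_le.2 (mk_le_mk_of_subset hsub)).trans mk_range_le_lift)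
  let f : ι → A := wellFounded_lt.fix fun i IH => (hfresh i fun j => IH j j.2).some
  have hf : ∀ i, f i ∈ S i \ range fun j : Iio i => f j := fun i => by
    rw [show f i = _ from wellFounded_lt.fix_eq _ i]
    exact Nonempty.some_mem _
  refine ⟨f, fun i j hij => ?_, fun i => (hf i).1⟩
  by_contra hne
  rcases lt_or_gt_of_ne hne with h | h
  · exact (hf j).2 ⟨⟨i, h⟩, hij⟩
  · exact (hf i).2 ⟨⟨j, h⟩, hij.symm⟩

theorem exists_injective_forall_mem_of_lift_mk_le (S : ι → Set A)
    (hS : ∀ i, lift.{v} #ι ≤ lift.{u} #(S i)) :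
    ∃ f : ι → A, Injective f ∧ ∀ i, f i ∈ S i := by
  obtain ⟨e⟩ : Nonempty (ι ≃ (#ι).ord.ToType) := Cardinal.eq.1 (mk_ord_toType _).symm
  have hIio : ∀ k : (#ι).ord.ToType, #(Iio k) < #ι := fun k => by simpa using mk_Iio_lt k
  obtain ⟨f, hf, hfS⟩ := exists_injective_forall_mem_of_lift_mk_Iio_lt (S ∘ e.symm)
    fun k => (lift_lt.2 (hIio k)).trans_le (hS _)
  exact ⟨f ∘ e, hf.comp e.injective, fun i => by simpa using hfS (e i)⟩

end DistinctRepresentatives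

section DisjointFamilies

variable {ι : Type u} {A : Type v}

theorem exists_pairwise_disjoint_forall_not_subset (X : Set A) (J : Set (Set A))
    (hJ : ∀ Y ∈ J, lift.{v} #ι * lift.{u} #J ≤ lift.{u} #↥(X \ Y)) :
    ∃ Z : ι → Set A, Pairwise (Disjoint on Z) ∧ (∀ i, Z i ⊆ X) ∧ ∀ i, ∀ Y ∈ J, ¬Z i ⊆ Y := by
  obtain ⟨x, hx, hxS⟩ :=
    exists_injective_forall_mem_of_lift_mk_le (fun p : ι × J => X \ p.2) fun p => by
      rw [mk_prod, lift_id'.{v, u}, lift_umax.{v, u}]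
      exact hJ _ p.2.2
  refine ⟨fun i => range fun Y : J => x (i, Y), fun i j hij => ?_, ?_, ?_⟩
  · refine disjoint_left.2 ?_
    rintro _ ⟨Y, rfl⟩ ⟨Y', hY'⟩
    exact hij (congrArg Prod.fst (hx hY')).symm
  · rintro i _ ⟨Y, rfl⟩
    exact (hxS (i, Y)).1
  · exact fun i Y hY hsub => (hxS (i, ⟨Y, hY⟩)).2 (hsub ⟨⟨Y, hY⟩, rfl⟩)

theorem exists_partition_of_pairwise_disjoint [Nonempty ι] {Z : ι → Set A} {X : Set A}
    (hdisj : Pairwise (Disjoint on Z)) (hne : ∀ i, (Z i).Nonempty) (hZX : ∀ i, Z i ⊆ X) :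
    ∃ P : Set (Set A), lift.{u} #P = lift.{v} #ι ∧ (∀ Y ∈ P, ∃ i, Z i ⊆ Y) ∧
      P.PairwiseDisjoint id ∧ ⋃₀ P = X := by
  obtain ⟨i₀⟩ := ‹Nonempty ι›
  set R := X \ ⋃ i, Z i
  set F : ι → Set A := fun i => Z i ∪ {a | a ∈ R ∧ i = i₀}
  have hFdisj : Pairwise (Disjoint on F) := by
    intro i j hij
    refine disjoint_union_left.2 ⟨disjoint_union_right.2 ⟨hdisj hij, ?_⟩,
      disjoint_union_right.2 ⟨?_, disjoint_left.2 fun a ha hb => hij (ha.2.trans hb.2.symm)⟩⟩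
    · exact disjoint_left.2 fun a ha hb => hb.1.2 (mem_iUnion_of_mem i ha)
    · exact disjoint_left.2 fun a ha hb => ha.1.2 (mem_iUnion_of_mem j hb)
  have hFinj : Injective F := pairwise_ne_iff_injective.1 fun i j hij =>
    (hFdisj hij).ne ((hne i).mono subset_union_left).ne_empty
  refine ⟨range F, mk_range_eq_of_injective hFinj, fun Y ⟨i, hi⟩ => ⟨i, hi ▸ subset_union_left⟩,
    hFdisj.range_pairwise, ?_⟩
  rw [sUnion_range]
  refine (iUnion_subset fun i => union_subset (hZX i) fun a ha => ha.1.1).antisymm fun a ha => ?_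
  by_cases haZ : a ∈ ⋃ i, Z i
  · obtain ⟨i, hi⟩ := mem_iUnion.1 haZ
    exact mem_iUnion_of_mem i (Or.inl hi)
  · exact mem_iUnion_of_mem i₀ (Or.inr ⟨⟨ha, haZ⟩, rfl⟩)

end DisjointFamilies

section Ideals

variable {A : Type*} {I : Set (Set A)}

theorem idealNon_le_mk {X : Set A} (hX : X ∉ I) : idealNon I ≤ #X :=
  csInf_le' ⟨X, hX, rfl⟩

theorem exists_cofinal_mk_eq_idealCof (I : Set (Set A)) :
    ∃ J : Set (Set A), J ⊆ I ∧ #J = idealCof I ∧ ∀ X ∈ I, ∃ Y ∈ J, X ⊆ Y :=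
  csInf_mem (s := {c | ∃ J : Set (Set A), J ⊆ I ∧ #J = c ∧ ∀ X ∈ I, ∃ Y ∈ J, X ⊆ Y})
    ⟨#I, I, subset_rfl, rfl, fun X hX => ⟨X, hX, subset_rfl⟩⟩

theorem mem_of_finite (hempty : ∅ ∈ I) (hunion : ∀ X ∈ I, ∀ Y ∈ I, X ∪ Y ∈ I)
    (hsingle : ∀ a : A, ({a} : Set A) ∈ I) {X : Set A} (hX : X.Finite) : X ∈ I := by
  induction X, hX using Set.Finite.induction_on with
  | empty => exact hempty
  | @insert a s _ _ hs => exact insert_eq a s ▸ hunion _ (hsingle a) _ hs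

theorem aleph0_le_idealNon (hfin : ∀ X : Set A, X.Finite → X ∈ I) {X : Set A} (hX : X ∉ I) :
    ℵ₀ ≤ idealNon I := by
  refine le_csInf ⟨#X, X, hX, rfl⟩ ?_
  rintro _ ⟨Y, hY, rfl⟩
  exact not_lt.1 fun hlt => hY (hfin Y (lt_aleph0_iff_set_finite.1 hlt))

theorem diff_notMem_of_mem (hlower : ∀ X ∈ I, ∀ Y : Set A, Y ⊆ X → Y ∈ I)
    (hunion : ∀ X ∈ I, ∀ Y ∈ I, X ∪ Y ∈ I) {X Y : Set A} (hX : X ∉ I) (hY : Y ∈ I) :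
    X \ Y ∉ I :=
  fun hXY => hX (hlower _ (hunion _ hXY _ hY) _ (subset_sdiff_union X Y))

end Ideals

theorem stmt0_general {A : Type*} (I : Set (Set A))
    (hlower : ∀ X ∈ I, ∀ Y : Set A, Y ⊆ X → Y ∈ I)
    (hunion : ∀ X ∈ I, ∀ Y ∈ I, X ∪ Y ∈ I)
    (hsingle : ∀ a : A, ({a} : Set A) ∈ I)
    (hnoncof : idealNon I = idealCof I)
    (X : Set A) (hX : X ∉ I) :
    ∃ P : Set (Set A), #P = idealNon I ∧ (∀ Y ∈ P, Y ∉ I) ∧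
      P.PairwiseDisjoint id ∧ ⋃₀ P = X := by
  rcases isEmpty_or_nonempty A with hA | ⟨⟨a⟩⟩
  · have hκ : idealNon I = 0 := nonpos_iff_eq_zero.1 ((idealNon_le_mk hX).trans_eq (mk_eq_zero _))
    exact ⟨∅, by simp [hκ], by simp, pairwiseDisjoint_empty, by simp [eq_empty_of_isEmpty X]⟩
  have hempty : ∅ ∈ I := hlower _ (hsingle a) _ (empty_subset _)
  set κ := idealNon I
  have hκ : ℵ₀ ≤ κ := aleph0_le_idealNon (fun _ => mem_of_finite hempty hunion hsingle) hX
  obtain ⟨J, hJI, hJκ, hJcof⟩ := exists_cofinal_mk_eq_idealCof I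
  have hsize : ∀ Y ∈ J, #κ.out * #J ≤ #↥(X \ Y) := fun Y hY => by
    rw [mk_out, hJκ, ← hnoncof, mul_eq_self hκ]
    exact idealNon_le_mk (diff_notMem_of_mem hlower hunion hX (hJI hY))
  obtain ⟨Z, hZdisj, hZX, hZJ⟩ :=
    exists_pairwise_disjoint_forall_not_subset (ι := κ.out) X J fun Y hY => by
      simpa using hsize Y hY
  have hZpos : ∀ i, Z i ∉ I := fun i hZ =>
    let ⟨Y, hY, hZY⟩ := hJcof _ hZ
    hZJ i Y hY hZY
  have : Nonempty κ.out := mk_ne_zero_iff.1 (by simpa using (aleph0_pos.trans_le hκ).ne')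
  obtain ⟨P, hP, hPZ, hPdisj, hPX⟩ := exists_partition_of_pairwise_disjoint hZdisj
    (fun i => nonempty_iff_ne_empty.2 fun h => hZpos i (h ▸ hempty)) hZX
  refine ⟨P, by simpa using hP, fun Y hY hYI => ?_, hPdisj, hPX⟩
  obtain ⟨i, hi⟩ := hPZ Y hY
  exact hZpos i (hlower _ hYI _ hi)

/-- If `I` is a (proper, containing all singletons) ideal over a set `A` with
`non(I) = cof(I)`, then every `I`-positive `X ⊆ A` can be partitioned into
`non(I)` many pairwise disjoint `I`-positive sets. -/
theorem stmt0 {A : Type*} (I : Set (Set A))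
    (hlower : ∀ X ∈ I, ∀ Y : Set A, Y ⊆ X → Y ∈ I)
    (hunion : ∀ X ∈ I, ∀ Y ∈ I, X ∪ Y ∈ I)
    (hproper : (Set.univ : Set A) ∉ I)
    (hsingle : ∀ a : A, ({a} : Set A) ∈ I)
    (hnoncof : idealNon I = idealCof I)
    (X : Set A) (hX : X ∉ I) :
    ∃ P : Set (Set A), #P = idealNon I ∧ (∀ Y ∈ P, Y ∉ I) ∧
      P.PairwiseDisjoint id ∧ ⋃₀ P = X :=
  stmt0_general I hlower hunion hsingle hnoncof X hX
end

section
/- If I is an ideal over a set A with non(I) = cof(I), then for every I-positive set X, the player Empty has a winning strategy in the ideal game G(I|X); consequently I is nowhere precipitous. -/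
open Cardinal Set

/-- The restricted ideal `I|X`, generated by `I` together with the complement of `X`:
for an ideal `I` this is `{Z | Z ∩ X ∈ I}`. -/
def idealRestrict {A : Type*} (I : Set (Set A)) (X : Set A) : Set (Set A) :=
  {Z | Z ∩ X ∈ I}

/-- The history of Nonempty's moves `X 0, …, X n`. -/
def gameHist {A : Type*} (X : ℕ → Set A) (n : ℕ) : List (Set A) :=
  (List.range (n + 1)).map X

/-- `σ` is a winning strategy for the player Empty in the ideal game `G(J)`:
Nonempty and Empty alternately choose `J`-positive sets
`X₁ ⊇ Y₁ ⊇ X₂ ⊇ Y₂ ⊇ ⋯`; Empty (playing `Yₙ = σ ⟨X₁,…,Xₙ⟩`) always answers a legal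
position with a `J`-positive subset, and for every infinite run following `σ`
the intersection of the moves is empty, i.e. Empty wins. -/
def IsWinningForEmpty {A : Type*} (J : Set (Set A)) (σ : List (Set A) → Set A) : Prop :=
  (∀ X : ℕ → Set A, ∀ n : ℕ,
      (∀ m ≤ n, X m ∉ J) →
      (∀ m < n, X (m + 1) ⊆ σ (gameHist X m)) →
      σ (gameHist X n) ⊆ X n ∧ σ (gameHist X n) ∉ J) ∧
  (∀ X : ℕ → Set A,
      (∀ n, X n ∉ J) →
      (∀ n, X (n + 1) ⊆ σ (gameHist X n)) →
      (⋂ n, X n) = ∅)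


/-!
Let `κ = non(I) = cof(I)` and enumerate a cofinal family of `I|X` as `(Z i)_{i < κ}`. Along
with her move `S`, Empty keeps a ranking `r : A → κ ∪ {⊤}` all of whose pieces
`{a ∈ S | r a ≤ i}` are null. Answering `x ⊆ S`, she picks for each `i` a point `f i ∈ x`
outside `Z i` with `r (f i) > i`; this avoids two null sets. The range of `f` is positive, as
no `Z i` covers it, and ranking `f i` by `i` keeps the pieces of size `< κ ≤ non(I)`, hence
null. A point of `⋂ Xₙ` would carry an infinite strictly decreasing sequence of ranks.
-/

section RankDescent

variable {A β : Type*} {J : Set (Set A)} {P : Set A → (A → β) → Prop}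
  (next : Set A → (A → β) → Set A × (A → β)) (r₀ : A → β)

def descentState (l : List (Set A)) : Set A × (A → β) :=
  l.foldl (fun s x => next x s.2) (∅, r₀)

theorem descentState_gameHist_zero (X : ℕ → Set A) :
    descentState next r₀ (gameHist X 0) = next (X 0) r₀ :=
  rfl

theorem descentState_gameHist_succ (X : ℕ → Set A) (n : ℕ) :
    descentState next r₀ (gameHist X (n + 1)) =
      next (X (n + 1)) (descentState next r₀ (gameHist X n)).2 := by
  simp [descentState, gameHist, List.range_succ]

variable [Preorder β] {next r₀}

theorem descentState_gameHist_spec (hanti : ∀ {T T' r}, T' ⊆ T → P T r → P T' r)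
    (hr₀ : ∀ T, P T r₀)
    (hnext : ∀ x r, x ∉ J → P x r → (next x r).1 ⊆ x ∧ (next x r).1 ∉ J ∧
      P (next x r).1 (next x r).2 ∧ ∀ a ∈ (next x r).1, (next x r).2 a < r a)
    (X : ℕ → Set A) (n : ℕ) (hpos : ∀ m ≤ n, X m ∉ J)
    (hlegal : ∀ m < n, X (m + 1) ⊆ (descentState next r₀ (gameHist X m)).1) :
    (descentState next r₀ (gameHist X n)).1 ⊆ X n ∧
      (descentState next r₀ (gameHist X n)).1 ∉ J ∧
      P (descentState next r₀ (gameHist X n)).1 (descentState next r₀ (gameHist X n)).2 := by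
  induction n with
  | zero =>
    obtain ⟨hsub, hJ, hP, -⟩ := hnext _ _ (hpos 0 le_rfl) (hr₀ (X 0))
    exact descentState_gameHist_zero next r₀ X ▸ ⟨hsub, hJ, hP⟩
  | succ n ih =>
    have hprev := ih (fun m hm => hpos m (by omega)) (fun m hm => hlegal m (by omega))
    obtain ⟨hsub, hJ, hP, -⟩ :=
      hnext _ _ (hpos _ le_rfl) (hanti (hlegal n n.lt_succ_self) hprev.2.2)
    exact descentState_gameHist_succ next r₀ X n ▸ ⟨hsub, hJ, hP⟩

end RankDescent

theorem exists_isWinningForEmpty_of_rank_descent {A β : Type*} [Preorder β] [WellFoundedLT β]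
    {J : Set (Set A)} {P : Set A → (A → β) → Prop}
    (hanti : ∀ {T T' r}, T' ⊆ T → P T r → P T' r) (r₀ : A → β) (hr₀ : ∀ T, P T r₀)
    (hstep : ∀ x r, x ∉ J → P x r → ∃ s : Set A × (A → β),
      s.1 ⊆ x ∧ s.1 ∉ J ∧ P s.1 s.2 ∧ ∀ a ∈ s.1, s.2 a < r a) :
    ∃ σ, IsWinningForEmpty J σ := by
  choose! next hnext using hstep
  set state := fun l => descentState next r₀ l
  refine ⟨fun l => (state l).1, fun X n hpos hlegal => ?_, fun X hpos hlegal => ?_⟩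
  · exact (descentState_gameHist_spec (P := P) hanti hr₀ hnext X n hpos hlegal).imp_right And.left
  have hspec n := descentState_gameHist_spec (P := P) hanti hr₀ hnext X n (fun m _ => hpos m)
    (fun m _ => hlegal m)
  refine eq_empty_of_forall_notMem fun a ha => ?_
  have hmem n : a ∈ (state (gameHist X n)).1 := hlegal n (mem_iInter.1 ha (n + 1))
  have hdesc n : (state (gameHist X (n + 1))).2 a < (state (gameHist X n)).2 a := by
    have hnext' := hnext _ _ (hpos (n + 1)) (hanti (hlegal n) (hspec n).2.2)
    rw [← descentState_gameHist_succ next r₀ X n] at hnext'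
    exact hnext'.2.2.2 a (hmem (n + 1))
  exact not_strictAnti_of_wellFoundedLT (fun n => (state (gameHist X n)).2 a)
    (strictAnti_nat_of_succ_lt hdesc)

section Cofinal

variable {A ι : Type*} [LinearOrder ι] {J : Set (Set A)}

def IsSmallRanking (J : Set (Set A)) (T : Set A) (r : A → WithTop ι) : Prop :=
  ∀ i : ι, {a ∈ T | r a ≤ i} ∈ J

theorem exists_smallRanking_descent
    (hlower : ∀ B ∈ J, ∀ C ⊆ B, C ∈ J) (hunion : ∀ B ∈ J, ∀ C ∈ J, B ∪ C ∈ J)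
    {Z : ι → Set A} (hZ : ∀ i, Z i ∈ J) (hcof : ∀ B ∈ J, ∃ i, B ⊆ Z i)
    (hsmall : ∀ (g : ι → A) (i : ι), g '' Iic i ∈ J)
    {x : Set A} (hx : x ∉ J) {r : A → WithTop ι} (hr : IsSmallRanking J x r) :
    ∃ s : Set A × (A → WithTop ι),
      s.1 ⊆ x ∧ s.1 ∉ J ∧ IsSmallRanking J s.1 s.2 ∧ ∀ a ∈ s.1, s.2 a < r a := by
  have hpick i : ∃ a ∈ x, a ∉ Z i ∧ ↑i < r a := by
    obtain ⟨a, hax, ha⟩ :=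
      not_subset.1 fun hsub => hx (hlower _ (hunion _ (hZ i) _ (hr i)) x hsub)
    simp only [mem_union, mem_sep_iff, not_or, not_and, not_le] at ha
    exact ⟨a, hax, ha.1, ha.2 hax⟩
  choose f hfx hfZ hfr using hpick
  classical
  let rank a : WithTop ι := if ha : a ∈ range f then ↑(rangeSplitting f ⟨a, ha⟩) else ⊤
  have hrank {a} (ha : a ∈ range f) : ∃ i, f i = a ∧ rank a = i :=
    ⟨_, apply_rangeSplitting f ⟨a, ha⟩, dif_pos ha⟩
  refine ⟨(range f, rank), range_subset_iff.2 hfx, fun hJ => ?_, fun i => ?_, fun a ha => ?_⟩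
  · obtain ⟨i, hi⟩ := hcof _ hJ
    exact hfZ i (hi (mem_range_self i))
  · refine hlower _ (hsmall f i) _ ?_
    rintro a ⟨ha, hle⟩
    obtain ⟨j, rfl, hj⟩ := hrank ha
    exact ⟨j, WithTop.coe_le_coe.1 (hj ▸ hle), rfl⟩
  · obtain ⟨j, rfl, hj⟩ := hrank ha
    exact hj.trans_lt (hfr j)

theorem exists_isWinningForEmpty_of_cofinal [WellFoundedLT ι]
    (hlower : ∀ B ∈ J, ∀ C ⊆ B, C ∈ J) (hunion : ∀ B ∈ J, ∀ C ∈ J, B ∪ C ∈ J)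
    {Z : ι → Set A} (hZ : ∀ i, Z i ∈ J) (hcof : ∀ B ∈ J, ∃ i, B ⊆ Z i)
    (hsmall : ∀ (g : ι → A) (i : ι), g '' Iic i ∈ J) :
    ∃ σ, IsWinningForEmpty J σ :=
  exists_isWinningForEmpty_of_rank_descent (P := IsSmallRanking J)
    (fun hsub hr i => hlower _ (hr i) _ fun _ ha => ⟨hsub ha.1, ha.2⟩) (fun _ => ⊤)
    (fun _ i => hlower _ (hZ i) _ fun _ h => absurd h.2 (WithTop.not_top_le_coe i))
    (fun _ _ hx hr => exists_smallRanking_descent hlower hunion hZ hcof hsmall hx hr)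

end Cofinal

theorem exists_isWinningForEmpty_of_isEmpty {A : Type*} [IsEmpty A] (J : Set (Set A)) :
    ∃ σ, IsWinningForEmpty J σ :=
  ⟨fun _ => ∅, fun X n hpos _ => ⟨empty_subset _, Subsingleton.elim (X n) ∅ ▸ hpos n le_rfl⟩,
    fun _ _ _ => Subsingleton.elim _ _⟩

section Ideal

variable {A : Type*} {I : Set (Set A)}

theorem idealRestrict_lower (hlower : ∀ B ∈ I, ∀ C ⊆ B, C ∈ I) (X : Set A) :
    ∀ B ∈ idealRestrict I X, ∀ C ⊆ B, C ∈ idealRestrict I X :=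
  fun _ hB _ hCB => hlower _ hB _ (inter_subset_inter_left X hCB)

theorem idealRestrict_union (hunion : ∀ B ∈ I, ∀ C ∈ I, B ∪ C ∈ I) (X : Set A) :
    ∀ B ∈ idealRestrict I X, ∀ C ∈ idealRestrict I X, B ∪ C ∈ idealRestrict I X :=
  fun B hB C hC => by
    show (B ∪ C) ∩ X ∈ I
    exact union_inter_distrib_right B C X ▸ hunion _ hB _ hC

theorem mem_idealRestrict_of_mem (hlower : ∀ B ∈ I, ∀ C ⊆ B, C ∈ I) {B : Set A} (hB : B ∈ I)
    (X : Set A) : B ∈ idealRestrict I X :=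
  hlower _ hB _ inter_subset_left

theorem union_compl_mem_idealRestrict (hlower : ∀ B ∈ I, ∀ C ⊆ B, C ∈ I) {B : Set A}
    (hB : B ∈ I) (X : Set A) : B ∪ Xᶜ ∈ idealRestrict I X :=
  hlower _ hB _ fun _ ha => ha.1.resolve_right (not_not_intro ha.2)

theorem mem_of_mk_lt_idealNon {T : Set A} (hT : #T < idealNon I) : T ∈ I :=
  by_contra fun h => hT.not_ge (csInf_le' ⟨T, h, rfl⟩)

theorem aleph0_le_idealNon_s1 (hempty : ∅ ∈ I) (hsingle : ∀ a : A, {a} ∈ I)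
    (hunion : ∀ B ∈ I, ∀ C ∈ I, B ∪ C ∈ I) (hproper : (univ : Set A) ∉ I) : ℵ₀ ≤ idealNon I := by
  have hfin (T : Set A) (hT : T.Finite) : T ∈ I :=
    hT.induction_on (motive := fun T _ => T ∈ I) T hempty fun _ _ hT => hunion _ (hsingle _) _ hT
  refine le_csInf ⟨_, Set.univ, hproper, rfl⟩ ?_
  rintro _ ⟨T, hT, rfl⟩
  rw [aleph0_le_mk_iff, infinite_coe_iff]
  exact fun hT' => hT (hfin T hT')

theorem exists_cofinal_indexed_ord_idealCof (I : Set (Set A)) :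
    ∃ Z : (idealCof I).ord.ToType → Set A, (∀ i, Z i ∈ I) ∧ ∀ B ∈ I, ∃ i, B ⊆ Z i := by
  obtain ⟨J₀, hJ₀I, hJ₀, hcof⟩ : idealCof I ∈ {c | ∃ J : Set (Set A), J ⊆ I ∧ #J = c ∧
      ∀ X ∈ I, ∃ Y ∈ J, X ⊆ Y} :=
    csInf_mem ⟨#I, I, subset_rfl, rfl, fun B hB => ⟨B, hB, subset_rfl⟩⟩
  obtain ⟨e⟩ : Nonempty ((idealCof I).ord.ToType ≃ J₀) := by
    rw [← Cardinal.eq, mk_toType, card_ord, hJ₀]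
  refine ⟨fun i => e i, fun i => hJ₀I (e i).2, fun B hB => ?_⟩
  obtain ⟨Y, hY, hBY⟩ := hcof B hB
  exact ⟨e.symm ⟨Y, hY⟩, by simpa using hBY⟩

end Ideal

theorem mk_Iic_toType_ord_lt {κ : Cardinal} (hκ : ℵ₀ ≤ κ) (i : κ.ord.ToType) : #(Iic i) < κ := by
  rw [← Iio_insert]
  exact mk_insert_le.trans_lt (add_one_lt_of_lt hκ (by simpa using mk_Iio_lt i))

/-- If `I` is an ideal over `A` with `non(I) = cof(I)`, then for every `I`-positive `X`
Empty has a winning strategy in the game `G(I|X)`; consequently (by the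
Galvin–Jech–Magidor characterization) `I` is nowhere precipitous. -/
theorem stmt1 {A : Type*} (I : Set (Set A))
    (hlower : ∀ X ∈ I, ∀ Y : Set A, Y ⊆ X → Y ∈ I)
    (hunion : ∀ X ∈ I, ∀ Y ∈ I, X ∪ Y ∈ I)
    (hproper : (Set.univ : Set A) ∉ I)
    (hsingle : ∀ a : A, ({a} : Set A) ∈ I)
    (hnoncof : idealNon I = idealCof I) :
    ∀ X : Set A, X ∉ I →
      ∃ σ : List (Set A) → Set A, IsWinningForEmpty (idealRestrict I X) σ := by
  intro X _
  rcases isEmpty_or_nonempty A with _ | ⟨⟨a₀⟩⟩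
  · exact exists_isWinningForEmpty_of_isEmpty _
  have hκ : ℵ₀ ≤ idealCof I := hnoncof ▸
    aleph0_le_idealNon_s1 (hlower _ (hsingle a₀) _ (empty_subset _)) hsingle hunion hproper
  obtain ⟨Z, hZ, hcof⟩ := exists_cofinal_indexed_ord_idealCof I
  refine exists_isWinningForEmpty_of_cofinal (idealRestrict_lower hlower X)
    (idealRestrict_union hunion X) (fun i => union_compl_mem_idealRestrict hlower (hZ i) X)
    (fun B hB => ?_) (fun g i => ?_)
  · obtain ⟨i, hi⟩ := hcof _ hB
    exact ⟨i, fun a ha => (em (a ∈ X)).imp (fun haX => hi ⟨ha, haX⟩) id⟩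
  · refine mem_idealRestrict_of_mem hlower (mem_of_mk_lt_idealNon ?_) X
    rw [hnoncof]
    exact mk_image_le.trans_lt (mk_Iic_toType_ord_lt hκ i)
end

section
/- Let κ be a regular uncountable cardinal and λ ≥ κ a cardinal with 2^{<κ} < λ^{<κ} = 2^λ. Then every unbounded subset of P_κ(λ) has cardinality 2^λ. -/
open Cardinal Set

/-- The ordinal corresponding to an element of the canonical type `o.toType` of
order type `o`. -/
noncomputable def ordAt {o : Ordinal} (x : o.ToType) : Ordinal :=
  ((Ordinal.ToType.mk (o := o)).symm x : Set.Iio o).1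

/-- `P_κ(λ)`, realized as the collection of subsets of the canonical type of order
type `o` (for `o = λ.ord`) of cardinality `< κ`. -/
def Pkl (κ : Cardinal) (o : Ordinal) : Set (Set o.ToType) := {s | #s < κ}

/-- Club subsets of `(P_κ(λ), ⊆)`: subfamilies of `P_κ(λ)` closed under unions of
`⊆`-increasing chains of length `< κ` and cofinal in `(P_κ(λ), ⊆)`. -/
def IsClubK (κ : Cardinal) (o : Ordinal) (C : Set (Set o.ToType)) : Prop :=
  C ⊆ Pkl κ o ∧
  (∀ D : Set (Set o.ToType),
      D ⊆ C → D.Nonempty → IsChain (· ⊆ ·) D → #D < κ → ⋃₀ D ∈ C) ∧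
  (∀ s ∈ Pkl κ o, ∃ t ∈ C, s ⊆ t)

/-- Stationary subsets of `P_κ(λ)`: sets meeting every club. -/
def IsStatK (κ : Cardinal) (o : Ordinal) (X : Set (Set o.ToType)) : Prop :=
  ∀ C, IsClubK κ o C → (X ∩ C).Nonempty

/-!
An unbounded `X ⊆ P_κ(λ)` covers `P_κ(λ)` by the power sets of its members, each of size at most
`2^{<κ}`, so `λ^{<κ} ≤ |P_κ(λ)| ≤ |X| · 2^{<κ}`. As `2^{<κ} < λ^{<κ} = 2^λ`, this forces
`|X| ≥ 2^λ`, while `|X| ≤ |𝒫(λ)| = 2^λ` trivially.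
-/

universe u

/-- A function `μ → α` is coded by its graph, carried into `α` along an embedding `μ × α ↪ α`. -/
theorem Cardinal.power_le_mk_setOf_mk_le {α : Type u} {μ : Cardinal.{u}} (h : μ * #α ≤ #α) :
    #α ^ μ ≤ #{t : Set α | #t ≤ μ} := by
  obtain ⟨e⟩ : #(μ.out × α) ≤ #α := by simpa using h
  have hgraph (f : μ.out → α) : #(e '' Function.graph f) ≤ μ := by
    refine mk_image_le.trans ((mk_le_of_injective (f := fun p : Function.graph f => p.1.1) ?_).trans
      (mk_out μ).le)
    rintro ⟨⟨a, b⟩, hab⟩ ⟨⟨a', b'⟩, hab'⟩ (rfl : a = a')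
    exact Subtype.ext (Prod.ext rfl (hab.symm.trans hab'))
  calc #α ^ μ = #(μ.out → α) := by rw [← power_def, mk_out]
    _ ≤ #{t : Set α | #t ≤ μ} :=
      mk_le_of_injective (f := fun f => ⟨e '' Function.graph f, hgraph f⟩) fun f g hfg =>
        Function.graph_injective (e.injective.image_injective (congrArg Subtype.val hfg))

theorem Cardinal.powerlt_le_mk_setOf_mk_lt {α : Type u} {κ : Cardinal.{u}} (hα : ℵ₀ ≤ #α)
    (hκ : κ ≤ #α) : #α ^< κ ≤ #{t : Set α | #t < κ} := by
  refine powerlt_le.2 fun μ hμ => ?_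
  have hμα : μ * #α ≤ #α :=
    calc μ * #α ≤ #α * #α := by gcongr; exact hμ.le.trans hκ
      _ = #α := mul_eq_self hα
  exact (power_le_mk_setOf_mk_le hμα).trans
    (mk_le_mk_of_subset fun _ ht => lt_of_le_of_lt ht hμ)

theorem Cardinal.mk_le_mul_two_powerlt_of_forall_exists_subset {α : Type u} {κ : Cardinal.{u}}
    {S X : Set (Set α)} (hX : ∀ t ∈ X, #t < κ) (hS : ∀ s ∈ S, ∃ t ∈ X, s ⊆ t) :
    #S ≤ #X * 2 ^< κ :=
  calc #S ≤ #(⋃ t ∈ X, 𝒫 t) := mk_le_mk_of_subset fun s hs => by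
        obtain ⟨t, ht, hst⟩ := hS s hs
        exact mem_biUnion ht hst
    _ ≤ #X * ⨆ t : X, #(𝒫 t.1) := mk_biUnion_le _ _
    _ ≤ #X * 2 ^< κ := by
        gcongr
        exact ciSup_le' fun t => (mk_powerset t.1).trans_le (le_powerlt 2 (hX t t.2))

theorem stmt2_general (κ lam : Cardinal) (hunc : ℵ₀ < κ)
    (hkl : κ ≤ lam) (h1 : (2 : Cardinal) ^< κ < lam ^< κ) (h2 : lam ^< κ = 2 ^ lam)
    (X : Set (Set lam.ord.ToType)) (hX : X ⊆ Pkl κ lam.ord)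
    (hub : ∀ s ∈ Pkl κ lam.ord, ∃ t ∈ X, s ⊆ t) :
    #X = 2 ^ lam := by
  have hmk : #lam.ord.ToType = lam := by rw [mk_toType, card_ord]
  have hlam : ℵ₀ ≤ lam := hunc.le.trans hkl
  refine le_antisymm ((mk_set_le X).trans_eq (by rw [mk_set, hmk])) ?_
  have hPkl : 2 ^ lam ≤ #(Pkl κ lam.ord) := by
    have := powerlt_le_mk_setOf_mk_lt (α := lam.ord.ToType) (hlam.trans_eq hmk.symm)
      (hkl.trans_eq hmk.symm)
    rwa [hmk, h2] at this
  have hcover : #(Pkl κ lam.ord) ≤ #X * 2 ^< κ :=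
    mk_le_mul_two_powerlt_of_forall_exists_subset hX hub
  by_contra! hX_lt
  exact (hPkl.trans hcover).not_gt (mul_lt_of_lt (hlam.trans (cantor lam).le) hX_lt (h2 ▸ h1))

/-- Let `κ` be regular uncountable and `λ ≥ κ` with `2^{<κ} < λ^{<κ} = 2^λ`.
Then every unbounded subset of `P_κ(λ)` has cardinality `2^λ`. -/
theorem stmt2 (κ lam : Cardinal) (hreg : κ.IsRegular) (hunc : ℵ₀ < κ)
    (hkl : κ ≤ lam) (h1 : (2 : Cardinal) ^< κ < lam ^< κ) (h2 : lam ^< κ = 2 ^ lam)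
    (X : Set (Set lam.ord.ToType)) (hX : X ⊆ Pkl κ lam.ord)
    (hub : ∀ s ∈ Pkl κ lam.ord, ∃ t ∈ X, s ⊆ t) :
    #X = 2 ^ lam :=
  stmt2_general κ lam hunc hkl h1 h2 X hX hub
end

section
/- Let κ be regular uncountable and λ ≥ κ. For X ⊆ P_κ(λ), X is stationary if and only if for every function f : λ^{<ω} → P_κ(λ) there exists s ∈ X with ⋃ f''(s^{<ω}) ⊆ s. -/
/-!
The family `C(f)` of small `f`-closed sets is club: it is closed under chains since a list
from a chain union lies in one member, and cofinal since closing a small set under `f` takes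
`ω` rounds, each of which keeps it small.

Conversely, given a club `C`, choose `T s ∈ C` above each small `s` and define `g F` for
finite `F` by recursion as `T` of `F` together with all `g F'`, `F' ⊂ F`; then `g` is a
monotone map into `C`. A small set `s` closed under `l ↦ g l.toFinset` is the union of the
`g F` with `F ⊆ s`, and such unions lie in `C` by induction on `#s`: an infinite `s` is the
union of the increasing chain of its initial segments in a well-order of type `(#s).ord`,
each of smaller size.
-/
open Cardinal Set

universe u

section

variable {β : Type u} {κ : Cardinal.{u}}

def ClosedUnder (f : List β → Set β) (s : Set β) : Prop :=
  ∀ l : List β, (∀ x ∈ l, x ∈ s) → f l ⊆ s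

lemma DirectedOn.exists_mem_forall_mem_of_forall_mem_sUnion {D : Set (Set β)}
    (hne : D.Nonempty) (hD : DirectedOn (· ⊆ ·) D) {l : List β} (hl : ∀ x ∈ l, x ∈ ⋃₀ D) :
    ∃ d ∈ D, ∀ x ∈ l, x ∈ d :=
  hD.exists_mem_subset_of_finite_of_subset_sUnion hne l.finite_toSet hl

lemma ClosedUnder.sUnion_of_isChain {f : List β → Set β} {D : Set (Set β)} (hne : D.Nonempty)
    (hD : IsChain (· ⊆ ·) D) (hf : ∀ d ∈ D, ClosedUnder f d) : ClosedUnder f (⋃₀ D) := by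
  intro l hl
  obtain ⟨d, hd, hld⟩ := hD.directedOn.exists_mem_forall_mem_of_forall_mem_sUnion hne hl
  exact (hf d hd l hld).trans (subset_sUnion_of_mem hd)

lemma mk_setOf_forall_mem_list_lt (hκ : ℵ₀ < κ) {s : Set β} (hs : #s < κ) :
    #{l : List β | ∀ x ∈ l, x ∈ s} < κ := by
  have hsub : {l : List β | ∀ x ∈ l, x ∈ s} ⊆ range (List.map ((↑) : s → β)) := by
    intro l hl
    lift l to List s using hl
    exact mem_range_self l
  calc #{l : List β | ∀ x ∈ l, x ∈ s} ≤ #(List s) := (mk_le_mk_of_subset hsub).trans mk_range_le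
    _ ≤ max ℵ₀ #s := mk_list_le_max s
    _ < κ := max_lt hκ hs

def closureStep (f : List β → Set β) (s : Set β) : Set β :=
  s ∪ ⋃ l ∈ {l : List β | ∀ x ∈ l, x ∈ s}, f l

lemma mk_closureStep_lt (hreg : κ.IsRegular) (hκ : ℵ₀ < κ) {f : List β → Set β}
    (hf : ∀ l, #(f l) < κ) {s : Set β} (hs : #s < κ) : #(closureStep f s) < κ :=
  (mk_union_le _ _).trans_lt <| add_lt_of_lt hreg.aleph0_le hs <|
    (card_biUnion_lt_iff_forall_of_isRegular hreg (mk_setOf_forall_mem_list_lt hκ hs)).2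
      fun l _ => hf l

lemma exists_closedUnder_superset (hreg : κ.IsRegular) (hκ : ℵ₀ < κ) {f : List β → Set β}
    (hf : ∀ l, #(f l) < κ) {s : Set β} (hs : #s < κ) :
    ∃ t, s ⊆ t ∧ #t < κ ∧ ClosedUnder f t := by
  set S : ℕ → Set β := fun n => (closureStep f)^[n] s
  have hS_succ (n : ℕ) : S (n + 1) = closureStep f (S n) := Function.iterate_succ_apply' ..
  have hS_mono : Monotone S :=
    monotone_nat_of_le_succ fun n => (hS_succ n).symm ▸ subset_union_left
  have hS_card (n : ℕ) : #(S n) < κ := by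
    induction n with
    | zero => exact hs
    | succ n ih => exact (hS_succ n).symm ▸ mk_closureStep_lt hreg hκ hf ih
  refine ⟨⋃ n, S n, subset_iUnion S 0, ?_, fun l hl => ?_⟩
  · rw [← sUnion_range, sUnion_eq_iUnion]
    refine (card_iUnion_lt_iff_forall_of_isRegular hreg ?_).2 fun i => ?_
    · exact ((countable_range S).le_aleph0).trans_lt hκ
    · obtain ⟨n, hn⟩ := i.2
      exact hn ▸ hS_card n
  · rw [← sUnion_range] at hl
    obtain ⟨_, ⟨n, rfl⟩, hln⟩ :=
      (hS_mono.directed_le).directedOn_range.exists_mem_forall_mem_of_forall_mem_sUnion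
        (range_nonempty S) hl
    refine subset_trans ?_ (subset_iUnion S (n + 1))
    rw [hS_succ]
    exact (subset_biUnion_of_mem (u := f) (show l ∈ {l | ∀ x ∈ l, x ∈ S n} from hln)).trans
      subset_union_right

lemma isClubK_setOf_closedUnder {o : Ordinal.{u}} (hreg : κ.IsRegular) (hκ : ℵ₀ < κ)
    {f : List o.ToType → Set o.ToType} (hf : ∀ l, #(f l) < κ) :
    IsClubK κ o {s | #s < κ ∧ ClosedUnder f s} := by
  refine ⟨fun s hs => hs.1, fun D hDC hne hD hDκ => ⟨?_, ?_⟩, fun s hs => ?_⟩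
  · rw [sUnion_eq_iUnion]
    exact (card_iUnion_lt_iff_forall_of_isRegular hreg hDκ).2 fun d => (hDC d.2).1
  · exact ClosedUnder.sUnion_of_isChain hne hD fun d hd => (hDC hd).2
  · obtain ⟨t, hst, ht⟩ := exists_closedUnder_superset hreg hκ hf hs
    exact ⟨t, ht, hst⟩

def ChainClosed (κ : Cardinal.{u}) (C : Set (Set β)) : Prop :=
  ∀ D : Set (Set β), D ⊆ C → D.Nonempty → IsChain (· ⊆ ·) D → #D < κ → ⋃₀ D ∈ C

variable {C : Set (Set β)}

lemma ChainClosed.iUnion_mem (hC : ChainClosed κ C) {ι : Type u} [LinearOrder ι] [Nonempty ι]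
    (hι : #ι < κ) {U : ι → Set β} (hU : Monotone U) (hUC : ∀ i, U i ∈ C) : ⋃ i, U i ∈ C := by
  rw [← sUnion_range]
  exact hC _ (range_subset_iff.2 hUC) (range_nonempty U) hU.isChain_range
    (mk_range_le.trans_lt hι)

lemma ChainClosed.iUnion_finset_mem (hC : ChainClosed κ C) {g : Finset β → Set β}
    (hg : Monotone g) (hgC : ∀ F, g F ∈ C) {t : Set β} (ht : #t < κ) :
    ⋃ (F : Finset β) (_ : ↑F ⊆ t), g F ∈ C := by
  induction hν : #t using WellFoundedLT.induction generalizing t with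
  | ind ν IH =>
  subst hν
  rcases t.finite_or_infinite with ht_fin | ht_inf
  · convert hgC ht_fin.toFinset using 1
    exact subset_antisymm (iUnion₂_subset fun F hF => hg (ht_fin.subset_toFinset.2 hF))
      (subset_iUnion₂_of_subset ht_fin.toFinset (by simp) le_rfl)
  have ht_aleph0 : ℵ₀ ≤ #t := aleph0_le_mk_iff.2 ht_inf.to_subtype
  set α := (#t).ord.ToType
  have hα : #α = #t := by simp [α]
  obtain ⟨b⟩ : Nonempty (α ≃ t) := Cardinal.eq.1 hα
  have : Nonempty α := Cardinal.mk_ne_zero_iff.1 (hα.trans_ne (aleph0_pos.trans_le ht_aleph0).ne')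
  set s : α → Set β := fun y => (fun z => (b z : β)) '' Iic y
  have hs_card (y : α) : #(s y) < #t :=
    mk_image_le.trans_lt ((mk_Iic_lt y (by simp [α]) (hα.symm ▸ ht_aleph0)).trans_eq hα)
  have hs_mono : Monotone s := fun y y' h => image_mono (Iic_subset_Iic.2 h)
  have hs_iUnion : ⋃ y, s y = t := by
    refine subset_antisymm (iUnion_subset fun y => ?_) fun x hx => ?_
    · rintro _ ⟨z, -, rfl⟩
      exact (b z).2
    · exact mem_iUnion.2 ⟨b.symm ⟨x, hx⟩, b.symm ⟨x, hx⟩, mem_Iic.2 le_rfl, by simp⟩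
  set U : α → Set β := fun y => ⋃ (F : Finset β) (_ : ↑F ⊆ s y), g F
  have hU_mem (y : α) : U y ∈ C := IH _ (hs_card y) ((hs_card y).trans ht) rfl
  have hU_mono : Monotone U := fun y y' h =>
    iUnion₂_mono' fun F hF => ⟨F, hF.trans (hs_mono h), le_rfl⟩
  convert hC.iUnion_mem (hα ▸ ht) hU_mono hU_mem using 1
  refine subset_antisymm (iUnion₂_subset fun F hF => ?_) (iUnion_subset fun y => ?_)
  · obtain ⟨y, hy⟩ :=
      hs_mono.directed_le.exists_mem_subset_of_finset_subset_biUnion (hs_iUnion ▸ hF)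
    exact subset_iUnion_of_subset y (subset_iUnion₂_of_subset F hy le_rfl)
  · exact iUnion₂_mono' fun F hF => ⟨F, hF.trans (hs_iUnion ▸ subset_iUnion s y), le_rfl⟩

variable [DecidableEq β] {T : Set β → Set β}

noncomputable def finsetHull (T : Set β → Set β) (F : Finset β) : Set β :=
  T (↑F ∪ ⋃ F' ∈ F.ssubsets, finsetHull T F')
termination_by F.card
decreasing_by exact Finset.card_lt_card (Finset.mem_ssubsets.1 ‹_›)

lemma finsetHull_mem_and_subset (hreg : κ.IsRegular) (hC : ∀ c ∈ C, #c < κ)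
    (hTC : ∀ s : Set β, #s < κ → T s ∈ C) (hsT : ∀ s : Set β, #s < κ → s ⊆ T s)
    (F : Finset β) :
    finsetHull T F ∈ C ∧ (F : Set β) ∪ ⋃ F' ∈ F.ssubsets, finsetHull T F' ⊆ finsetHull T F := by
  induction F using Finset.strongInduction with
  | _ F IH =>
  rw [finsetHull]
  have hfin {γ : Type u} (s : Set γ) (hs : s.Finite) : #s < κ :=
    hs.lt_aleph0.trans_le hreg.aleph0_le
  have hunion : #↥(⋃ F' ∈ (F.ssubsets : Set (Finset β)), finsetHull T F') < κ :=
    (card_biUnion_lt_iff_forall_of_isRegular hreg (hfin _ F.ssubsets.finite_toSet)).2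
      fun F' hF' => hC _ (IH F' (Finset.mem_ssubsets.1 hF')).1
  have hA : #↥((F : Set β) ∪ ⋃ F' ∈ F.ssubsets, finsetHull T F') < κ :=
    (mk_union_le _ _).trans_lt (add_lt_of_lt hreg.aleph0_le (hfin _ F.finite_toSet) hunion)
  exact ⟨hTC _ hA, hsT _ hA⟩

lemma monotone_finsetHull (hreg : κ.IsRegular) (hC : ∀ c ∈ C, #c < κ)
    (hTC : ∀ s : Set β, #s < κ → T s ∈ C) (hsT : ∀ s : Set β, #s < κ → s ⊆ T s) :
    Monotone (finsetHull T) := by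
  intro F' F hF'F
  obtain rfl | hF'F := eq_or_ssubset_of_subset hF'F
  · exact le_rfl
  · exact ((subset_biUnion_of_mem (Finset.mem_ssubsets.2 hF'F)).trans subset_union_right).trans
      (finsetHull_mem_and_subset hreg hC hTC hsT F).2

lemma ClosedUnder.iUnion_finset_eq {g : Finset β → Set β} {s : Set β}
    (hs : ClosedUnder (fun l => g l.toFinset) s) (hg : ∀ F, ↑F ⊆ g F) :
    ⋃ (F : Finset β) (_ : ↑F ⊆ s), g F = s := by
  refine subset_antisymm (iUnion₂_subset fun F hF => ?_) fun z hz => ?_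
  · simpa using hs F.toList fun x hx => hF (Finset.mem_toList.1 hx)
  · exact mem_iUnion₂.2 ⟨{z}, by simpa using hz, hg {z} (by simp)⟩

end

theorem stmt5_general (κ lam : Cardinal) (hreg : κ.IsRegular) (hunc : ℵ₀ < κ)
    (X : Set (Set lam.ord.ToType)) (hX : X ⊆ Pkl κ lam.ord) :
    IsStatK κ lam.ord X ↔
      ∀ f : List lam.ord.ToType → Set lam.ord.ToType,
        (∀ l, f l ∈ Pkl κ lam.ord) →
        ∃ s ∈ X, ∀ l : List lam.ord.ToType, (∀ x ∈ l, x ∈ s) → f l ⊆ s := by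
  classical
  refine ⟨fun hX_stat f hf => ?_, fun hX_meets C hC => ?_⟩
  · obtain ⟨s, hsX, -, hs⟩ := hX_stat _ (isClubK_setOf_closedUnder hreg hunc hf)
    exact ⟨s, hsX, hs⟩
  · obtain ⟨hC_small, hC_chain, hC_cofinal⟩ := hC
    choose! T hTC hsT using hC_cofinal
    have hg := finsetHull_mem_and_subset hreg hC_small hTC hsT
    obtain ⟨s, hsX, hs⟩ := hX_meets (fun l => finsetHull T l.toFinset) fun l => hC_small (hg _).1
    refine ⟨s, hsX, ?_⟩
    rw [← ClosedUnder.iUnion_finset_eq hs fun F => subset_union_left.trans (hg F).2]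
    exact ChainClosed.iUnion_finset_mem hC_chain (monotone_finsetHull hreg hC_small hTC hsT)
      (fun F => (hg F).1) (hX hsX)

/-- Let `κ` be regular uncountable and `λ ≥ κ`. A set `X ⊆ P_κ(λ)` is stationary iff
for every `f : λ^{<ω} → P_κ(λ)` there is `s ∈ X` with `⋃ f''(s^{<ω}) ⊆ s`
(i.e. the sets `C(f)` generate the club filter). -/
theorem stmt5 (κ lam : Cardinal) (hreg : κ.IsRegular) (hunc : ℵ₀ < κ)
    (hkl : κ ≤ lam)
    (X : Set (Set lam.ord.ToType)) (hX : X ⊆ Pkl κ lam.ord) :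
    IsStatK κ lam.ord X ↔
      ∀ f : List lam.ord.ToType → Set lam.ord.ToType,
        (∀ l, f l ∈ Pkl κ lam.ord) →
        ∃ s ∈ X, ∀ l : List lam.ord.ToType, (∀ x ∈ l, x ∈ s) → f l ⊆ s :=
  stmt5_general κ lam hreg hunc X hX
end

section
/- Let κ be a regular uncountable cardinal, I a κ-complete normal ideal over κ, and δ a cardinal with δ⁺ < κ such that {α < κ : cf(α) = δ} ∉ I. Then there exist a stationary set E ⊆ {α < κ : cf(α) = ℵ₀} and an I-positive set X ⊆ {α < κ : cf(α) = δ} such that E ∩ α is non-stationary in α for every α ∈ X. -/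
open Cardinal Set

noncomputable def cofAt {o : Ordinal} (a : o.ToType) : Cardinal := (ordAt a).cof

/-- Club subsets of (the canonical type of order type) `o`: unbounded sets
containing all of their limit points. -/
def OClub {o : Ordinal} (C : Set o.ToType) : Prop :=
  (∀ a, ∃ c ∈ C, a ≤ c) ∧
  ∀ a : o.ToType, (∃ c ∈ C, c < a) → (∀ b < a, ∃ c ∈ C, b < c ∧ c < a) → a ∈ C

def OStat {o : Ordinal} (S : Set o.ToType) : Prop :=
  ∀ C, OClub C → (S ∩ C).Nonempty

/-- `c` is a club subset of (the initial segment below) the element `a`. -/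
def ClubBelow {o : Ordinal} (c : Set o.ToType) (a : o.ToType) : Prop :=
  c ⊆ Set.Iio a ∧ (∀ b < a, ∃ x ∈ c, b ≤ x) ∧
  ∀ x < a, (∃ y ∈ c, y < x) → (∀ b < x, ∃ y ∈ c, b < y ∧ y < x) → x ∈ c

/-!
Fix for every point `a` of countable cofinality a cofinal `ω`-sequence `t a`. If no coordinate
`n` made `{a | η ≤ t a n}` stationary for all `η`, the countably many witnessing clubs together
with a bound on the `η`s would give a club avoiding the countable-cofinality points. For a good `n`,
Fodor's lemma applied to `a ↦ t a n` yields unboundedly many values with stationary fibres, hence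
`κ > δ⁺` pairwise disjoint stationary sets `E ν` of points of countable cofinality. A point of
cofinality `δ` carries a club of size `δ` below it, which misses some `E ν`; so the `δ⁺` sets
`X ν` of such points whose club misses `E ν` cover `{a | cf a = δ}`, and `κ`-completeness makes one
of them `I`-positive.
-/

open Function Order

universe u

section LinearOrder

variable {α : Type*} [LinearOrder α] {s : Set α} {a : α}

theorem dirSupClosed_iff_forall_lt : DirSupClosed s ↔
    ∀ a, (∃ c ∈ s, c < a) → (∀ b < a, ∃ c ∈ s, b < c ∧ c < a) → a ∈ s := by
  rw [dirSupClosed_iff_of_linearOrder]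
  constructor
  · rintro h a ⟨c, hcs, hca⟩ hlim
    refine h inter_subset_left ⟨c, hcs, hca⟩ ⟨fun x hx => le_of_lt hx.2, fun u hu => ?_⟩
    by_contra! hua
    obtain ⟨c, hcs, huc, hca⟩ := hlim u hua
    exact (hu ⟨hcs, hca⟩).not_gt huc
  · intro h d hds ⟨c, hcd⟩ a ha
    by_cases had : a ∈ d
    · exact hds had
    have hlt : ∀ x ∈ d, x < a := fun x hx => (ha.1 hx).lt_of_ne (ne_of_mem_of_not_mem hx had)
    refine h a ⟨c, hds hcd, hlt c hcd⟩ fun b hb => ?_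
    obtain ⟨x, hxd, hbx⟩ : ∃ x ∈ d, b < x := by
      by_contra! hb'
      exact hb.not_ge (ha.2 hb')
    exact ⟨x, hds hxd, hbx, hlt x hxd⟩

theorem IsClub.mem_of_forall_lt (hs : IsClub s) (hlt : ∃ c ∈ s, c < a)
    (hlim : ∀ b < a, ∃ c ∈ s, b < c ∧ c < a) : a ∈ s :=
  dirSupClosed_iff_forall_lt.1 hs.dirSupClosed a hlt hlim

theorem isClub_Ioi [NoMaxOrder α] (b : α) : IsClub (Ioi b) := by
  refine ⟨(isUpperSet_Ioi (a := b)).dirSupClosed, fun x => ?_⟩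
  obtain ⟨y, hy⟩ := exists_gt (max x b)
  exact ⟨y, (le_max_right x b).trans_lt hy, (le_max_left x b).trans hy.le⟩

theorem exists_forall_lt_of_mk_lt_cof (hs : #s < cof α) : ∃ b, ∀ x ∈ s, x < b :=
  not_isCofinal_iff.1 fun h => (cof_le h).not_gt hs

theorem noMaxOrder_of_one_lt_cof (h : 1 < cof α) : NoMaxOrder α :=
  (noTopOrder_iff_noMaxOrder α).1 (cof_ne_one_iff.1 h.ne')

theorem IsClub.exists_gt [NoMaxOrder α] (hs : IsClub s) (x : α) : ∃ y ∈ s, x < y := by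
  obtain ⟨z, hz⟩ := NoMaxOrder.exists_gt x
  obtain ⟨y, hys, hzy⟩ := hs.isCofinal z
  exact ⟨y, hys, hz.trans_le hzy⟩

end LinearOrder

theorem exists_disjoint_of_mk_lt {α ι : Type u} {E : ι → Set α} (hE : Pairwise (Disjoint on E))
    {c : Set α} (hc : #c < #ι) : ∃ i, Disjoint c (E i) := by
  by_contra! h
  choose w hwc hwE using fun i => not_disjoint_iff.1 (h i)
  refine hc.not_ge (mk_le_of_injective (f := fun i => (⟨w i, hwc i⟩ : c)) fun i j hij => ?_)
  by_contra hne
  exact (hE hne).ne_of_mem (hwE i) (hwE j) (congrArg Subtype.val hij)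

theorem exists_notMem_of_subset_iUnion {β ι : Type u} {κ : Cardinal.{u}} {I : Set (Set β)}
    (hlower : ∀ Y ∈ I, ∀ Z, Z ⊆ Y → Z ∈ I)
    (hcomplete : ∀ S : Set (Set β), S ⊆ I → #S < κ → ⋃₀ S ∈ I) (hι : #ι < κ)
    {X : ι → Set β} {Y : Set β} (hY : Y ∉ I) (hYX : Y ⊆ ⋃ i, X i) : ∃ i, X i ∉ I := by
  by_contra! h
  refine hY (hlower _ (hcomplete (range X) (range_subset_iff.2 h) (mk_range_le.trans_lt hι)) _ ?_)
  rwa [sUnion_range]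

theorem exists_isCofinal_range_of_cof_eq_aleph0 {β : Type*} [Preorder β] (h : cof β = ℵ₀) :
    ∃ f : ℕ → β, IsCofinal (range f) := by
  obtain ⟨s, hs, hs'⟩ := exists_cof_eq β
  rw [h] at hs'
  have hne : s.Nonempty := nonempty_coe_sort.1 (mk_ne_zero_iff.1 (hs'.trans_ne aleph0_ne_zero))
  obtain ⟨f, rfl⟩ := (le_aleph0_iff_set_countable.1 hs'.le).exists_eq_range hne
  exact ⟨f, hs⟩

section WellOrder

variable {α : Type u} [LinearOrder α] [WellFoundedLT α]

theorem exists_sup_of_strictMono (hα : ℵ₀ < cof α) {g : ℕ → α} (hg : StrictMono g) :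
    ∃ s, (∀ n, g n < s) ∧ (∀ y < s, ∃ n, y < g n) ∧ cof (Iio s) = ℵ₀ := by
  have hbdd : {s | ∀ n, g n < s}.Nonempty := by
    obtain ⟨b, hb⟩ := exists_forall_lt_of_mk_lt_cof
      ((le_aleph0_iff_set_countable.2 (countable_range g)).trans_lt hα)
    exact ⟨b, fun n => hb _ ⟨n, rfl⟩⟩
  obtain ⟨s, hgs, hmin⟩ := wellFounded_lt.has_min _ hbdd
  have hsg : ∀ y < s, ∃ n, y < g n := fun y hy => by
    by_contra! h
    exact hmin y (fun n => (hg n.lt_succ_self).trans_le (h _)) hy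
  refine ⟨s, hgs, hsg, ?_⟩
  have hcofinal : IsCofinal (range fun n => (⟨g n, hgs n⟩ : Iio s)) := fun y => by
    obtain ⟨n, hn⟩ := hsg y y.2
    exact ⟨_, ⟨n, rfl⟩, hn.le⟩
  simpa using (lift_cof_congr_of_strictMono (f := fun n => (⟨g n, hgs n⟩ : Iio s)) hg hcofinal).symm

theorem isStationary_setOf_cof_Iio_eq_aleph0 (hα : ℵ₀ < cof α) :
    IsStationary {a : α | cof (Iio a) = ℵ₀} := by
  have : Nonempty α := cof_ne_zero_iff.1 (aleph0_pos.trans hα).ne'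
  have := noMaxOrder_of_one_lt_cof (one_lt_aleph0.trans hα)
  intro C hC
  choose next hnextC hnext using hC.exists_gt
  let g n := next^[n + 1] (Classical.arbitrary α)
  have hgC n : g n ∈ C := by
    simp only [g, iterate_succ_apply']
    exact hnextC _
  have hg : StrictMono g := strictMono_nat_of_lt_succ fun n => by
    simp only [g, iterate_succ_apply' next (n + 1)]
    exact hnext _
  obtain ⟨s, hgs, hsg, hcof⟩ := exists_sup_of_strictMono hα hg
  refine ⟨s, hcof, hC.mem_of_forall_lt ⟨g 0, hgC 0, hgs 0⟩ fun y hy => ?_⟩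
  obtain ⟨n, hn⟩ := hsg y hy
  exact ⟨g n, hgC n, hn, hgs n⟩

theorem IsStationary.exists_forall_isStationary_le (hα : ℵ₀ < cof α) {S : Set α}
    (hS : IsStationary S) {t : α → ℕ → α} (ht : ∀ a ∈ S, ∀ b < a, ∃ n, b ≤ t a n) :
    ∃ n, ∀ η, IsStationary {a ∈ S | η ≤ t a n} := by
  have := noMaxOrder_of_one_lt_cof (one_lt_aleph0.trans hα)
  by_contra! h
  simp_rw [not_isStationary_iff] at h
  choose η C hC hdisj using h
  obtain ⟨b, hb⟩ := exists_forall_lt_of_mk_lt_cof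
    ((le_aleph0_iff_set_countable.2 (countable_range η)).trans_lt hα)
  have hD : IsClub (Ioi b ∩ ⋂ n, C n) :=
    (isClub_Ioi b).inter hα.ne' (IsClub.iInter_of_countable hα.ne' hC)
  obtain ⟨a, haS, hba, haC⟩ := hS hD
  obtain ⟨n, hn⟩ := ht a haS b hba
  exact disjoint_left.1 (hdisj n) ⟨haS, (hb _ ⟨n, rfl⟩).le.trans hn⟩ (mem_iInter.1 haC n)

variable (α) in
theorem exists_isClub_mk_le_cof : ∃ c : Set α, IsClub c ∧ #c ≤ cof α := by
  rcases lt_or_ge (cof α) ℵ₀ with hfin | hinf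
  · rcases isEmpty_or_nonempty α with _ | _
    · exact ⟨∅, IsClub.of_isEmpty, by simp⟩
    obtain ⟨x, hx⟩ := cof_le_one_iff.1 (cof_lt_aleph0_iff.1 hfin)
    refine ⟨{x}, ⟨PartialOrder.dirSupClosed_singleton x, fun y => ⟨x, rfl, hx y⟩⟩, ?_⟩
    rw [mk_singleton]
    exact Cardinal.one_le_iff_ne_zero.2 cof_ne_zero
  obtain ⟨s, hs, hcard⟩ := exists_cof_eq α
  -- `s` is cofinal below every point of `L`, so `x ↦ min (s ∩ Ici x)` embeds `L` into `s`.
  let L := {x | ∀ y < x, ∃ c ∈ s, y < c ∧ c < x}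
  refine ⟨s ∪ L, ⟨dirSupClosed_iff_forall_lt.2 fun x _ hlim => Or.inr fun y hy => ?_,
    hs.mono subset_union_left⟩, ?_⟩
  · obtain ⟨z, hz | hz, hyz, hzx⟩ := hlim y hy
    · exact ⟨z, hz, hyz, hzx⟩
    · obtain ⟨c, hc, hyc, hcz⟩ := hz y hyz
      exact ⟨c, hc, hyc, hcz.trans hzx⟩
  choose m hm hmin using fun x => wellFounded_lt.has_min (s ∩ Ici x) (hs x)
  have hmono : StrictMono fun x : L => (⟨m x, (hm x).1⟩ : s) := fun x y hxy => by
    obtain ⟨c, hcs, hxc, hcy⟩ := y.2 x hxy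
    exact (not_lt.1 (hmin x c ⟨hcs, hxc.le⟩)).trans_lt (hcy.trans_le (hm y).2)
  calc #(s ∪ L : Set α) ≤ #s + #L := mk_union_le _ _
    _ ≤ #s + #s := by gcongr; exact mk_le_of_injective hmono.injective
    _ = cof α := by rw [hcard, add_eq_self hinf]

end WellOrder

def diagInter {α : Type*} [LT α] (C : α → Set α) : Set α := {a | ∀ b < a, a ∈ C b}

section RegularCardinalOrder

variable {α : Type u} [LinearOrder α] [WellFoundedLT α] [IsRegularCardinalOrder α]

theorem isClub_diagInter (hα : ℵ₀ < cof α) {C : α → Set α} (hC : ∀ b, IsClub (C b)) :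
    IsClub (diagInter C) := by
  have := noMaxOrder_of_one_lt_cof (one_lt_aleph0.trans hα)
  refine ⟨dirSupClosed_iff_forall_lt.2 fun a _ hlim b hba => ?_, fun x => ?_⟩
  · obtain ⟨c, hcD, hbc, hca⟩ := hlim b hba
    refine (hC b).mem_of_forall_lt ⟨c, hcD b hbc, hca⟩ fun y hy => ?_
    obtain ⟨c, hcD, hyc, hca⟩ := hlim (max y b) (max_lt hy hba)
    exact ⟨c, hcD b ((le_max_right y b).trans_lt hyc), (le_max_left y b).trans_lt hyc, hca⟩
  have hE (y : α) : IsClub (⋂ b : Iic y, C b) := by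
    refine IsClub.iInter hα.ne' ?_ fun b => hC b
    rw [lift_lt, cof_eq_cardinalMk]
    exact mk_Iic_lt y ord_cardinalMk (cof_eq_cardinalMk (α := α) ▸ hα.le)
  choose next hnextE hnext using fun y => (hE y).exists_gt y
  let g n := next^[n] x
  have hg : StrictMono g := strictMono_nat_of_lt_succ fun n => by
    simp only [g, iterate_succ_apply']
    exact hnext _
  obtain ⟨s, hgs, hsg, -⟩ := exists_sup_of_strictMono hα hg
  refine ⟨s, fun b hb => ?_, (hgs 0).le⟩
  obtain ⟨n, hn⟩ := hsg b hb
  have hgC m (hm : n ≤ m) : g (m + 1) ∈ C b := by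
    simp only [g, iterate_succ_apply']
    exact mem_iInter.1 (hnextE (g m)) ⟨b, hn.le.trans (hg.monotone hm)⟩
  refine (hC b).mem_of_forall_lt ⟨g (n + 1), hgC n le_rfl, hgs _⟩ fun y hy => ?_
  obtain ⟨m, hm⟩ := hsg y hy
  exact ⟨g (max n m + 1), hgC _ (le_max_left n m),
    hm.trans_le (hg.monotone (by omega)), hgs _⟩

theorem IsStationary.exists_isStationary_fiber (hα : ℵ₀ < cof α) {S : Set α}
    (hS : IsStationary S) {f : α → α} (hf : ∀ a ∈ S, f a < a) :
    ∃ b, IsStationary {a ∈ S | f a = b} := by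
  by_contra! h
  simp_rw [not_isStationary_iff] at h
  choose C hC hdisj using h
  obtain ⟨a, haS, haD⟩ := hS (isClub_diagInter hα hC)
  exact disjoint_left.1 (hdisj (f a)) ⟨haS, rfl⟩ (haD _ (hf a haS))

theorem IsStationary.exists_pairwise_disjoint (hα : ℵ₀ < cof α) {S : Set α}
    (hS : IsStationary S) (hSω : ∀ a ∈ S, cof (Iio a) = ℵ₀) {ι : Type u} (hι : #ι ≤ #α) :
    ∃ E : ι → Set α, (∀ i, E i ⊆ S) ∧ (∀ i, IsStationary (E i)) ∧ Pairwise (Disjoint on E) := by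
  have : Nonempty α := ⟨hS.nonempty.some⟩
  have hseq a (ha : a ∈ S) : ∃ t : ℕ → α, (∀ n, t n < a) ∧ ∀ b < a, ∃ n, b ≤ t n := by
    obtain ⟨f, hf⟩ := exists_isCofinal_range_of_cof_eq_aleph0 (hSω a ha)
    refine ⟨fun n => f n, fun n => (f n).2, fun b hb => ?_⟩
    obtain ⟨_, ⟨n, rfl⟩, hn⟩ := hf ⟨b, hb⟩
    exact ⟨n, hn⟩
  choose! t htlt htcof using hseq
  obtain ⟨n, hn⟩ := hS.exists_forall_isStationary_le hα htcof
  choose V hV using fun η => (hn η).exists_isStationary_fiber hα (f := (t · n))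
    fun a ha => htlt a ha.1 n
  have hVcof : IsCofinal (range V) := fun η => by
    obtain ⟨a, ⟨-, hηa⟩, ha⟩ := (hV η).nonempty
    exact ⟨_, ⟨η, rfl⟩, ha ▸ hηa⟩
  obtain ⟨j⟩ : Nonempty (ι ↪ range V) := by
    rw [← le_def]
    exact hι.trans (cof_eq_cardinalMk (α := α) ▸ cof_le hVcof)
  refine ⟨fun i => {a ∈ S | t a n = j i}, fun i => sep_subset _ _, fun i => ?_, fun i i' hii' => ?_⟩
  · obtain ⟨η, hη⟩ := (j i).2
    exact (hV η).mono fun a ha => ⟨ha.1.1, ha.2.trans hη⟩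
  · exact disjoint_left.2 fun a ha ha' => hii' (j.injective (Subtype.ext (ha.2.symm.trans ha'.2)))

end RegularCardinalOrder

section ToType

theorem Cardinal.IsRegular.isRegularCardinalOrder_toType {κ : Cardinal} (h : κ.IsRegular) :
    IsRegularCardinalOrder κ.ord.ToType :=
  ⟨by rw [Ordinal.type_toType, Ordinal.cof_toType, h.cof_ord]⟩

variable {o : Ordinal}

theorem cofAt_eq_cof_Iio (a : o.ToType) : cofAt a = cof (Iio a) :=
  (Order.cof_Iio a).symm

theorem oClub_iff_isClub {C : Set o.ToType} : OClub C ↔ IsClub C := by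
  rw [OClub, isClub_iff, dirSupClosed_iff_forall_lt, and_comm]
  rfl

theorem oStat_iff_isStationary {S : Set o.ToType} : OStat S ↔ IsStationary S := by
  simp only [OStat, oClub_iff_isClub]
  rfl

theorem IsClub.clubBelow_image_val {a : o.ToType} {c : Set (Iio a)} (hc : IsClub c) :
    ClubBelow (Subtype.val '' c) a := by
  refine ⟨image_subset_iff.2 fun x _ => x.2, fun b hb => ?_, fun x hx hlt hlim => ?_⟩
  · obtain ⟨y, hy, hby⟩ := hc.isCofinal ⟨b, hb⟩
    exact ⟨y, mem_image_of_mem _ hy, hby⟩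
  refine ⟨⟨x, hx⟩, hc.mem_of_forall_lt ?_ fun b hb => ?_, rfl⟩
  · obtain ⟨_, ⟨y, hy, rfl⟩, hyx⟩ := hlt
    exact ⟨y, hy, hyx⟩
  · obtain ⟨_, ⟨y, hy, rfl⟩, hby, hyx⟩ := hlim b hb
    exact ⟨y, hy, hby, hyx⟩

theorem exists_clubBelow_mk_le_cofAt (a : o.ToType) : ∃ c, ClubBelow c a ∧ #c ≤ cofAt a := by
  obtain ⟨c, hc, hcard⟩ := exists_isClub_mk_le_cof (Iio a)
  exact ⟨_, hc.clubBelow_image_val, mk_image_le.trans (hcard.trans_eq (cofAt_eq_cof_Iio a).symm)⟩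

end ToType

theorem stmt13_general (κ δ : Cardinal) (hreg : κ.IsRegular) (hunc : ℵ₀ < κ)
    (hδ : Order.succ δ < κ)
    (I : Set (Set κ.ord.ToType))
    (hlower : ∀ Y ∈ I, ∀ Z : Set κ.ord.ToType, Z ⊆ Y → Z ∈ I)
    (hcomplete : ∀ S : Set (Set κ.ord.ToType), S ⊆ I → #S < κ → ⋃₀ S ∈ I)
    (hpos : {a : κ.ord.ToType | cofAt a = δ} ∉ I) :
    ∃ E X : Set κ.ord.ToType,
      E ⊆ {a | cofAt a = ℵ₀} ∧ OStat E ∧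
      X ⊆ {a | cofAt a = δ} ∧ X ∉ I ∧
      ∀ a ∈ X, ∃ c, ClubBelow c a ∧ c ∩ E = ∅ := by
  have := hreg.isRegularCardinalOrder_toType
  have hcof : ℵ₀ < cof κ.ord.ToType := by rwa [Ordinal.cof_toType, hreg.cof_ord]
  obtain ⟨E, hEω, hEstat, hEdisj⟩ :=
    (isStationary_setOf_cof_Iio_eq_aleph0 hcof).exists_pairwise_disjoint hcof (fun _ ha => ha)
      (ι := (succ δ).ord.ToType) (by simpa using hδ.le)
  let X ν := {a | cofAt a = δ ∧ ∃ c, ClubBelow c a ∧ c ∩ E ν = ∅}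
  have hcover : {a | cofAt a = δ} ⊆ ⋃ ν, X ν := fun a ha => by
    obtain ⟨c, hc, hcard⟩ := exists_clubBelow_mk_le_cofAt a
    obtain ⟨ν, hν⟩ := exists_disjoint_of_mk_lt hEdisj (c := c)
      (by rw [mk_toType, card_ord]; exact (hcard.trans_eq ha).trans_lt (lt_succ δ))
    exact mem_iUnion.2 ⟨ν, ha, c, hc, disjoint_iff_inter_eq_empty.1 hν⟩
  obtain ⟨ν, hν⟩ := exists_notMem_of_subset_iUnion hlower hcomplete (by simpa using hδ) hpos hcover
  exact ⟨E ν, X ν, fun a ha => (cofAt_eq_cof_Iio a).trans (hEω ν ha),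
    oStat_iff_isStationary.2 (hEstat ν), fun _ ha => ha.1, hν, fun _ ha => ha.2⟩

/-- (Claim 1 of Theorem 6.) Let `κ` be regular uncountable, `I` a `κ`-complete
normal ideal over `κ`, and `δ` a cardinal with `δ⁺ < κ` such that
`{α < κ : cf(α) = δ} ∉ I`. Then there are a stationary `E ⊆ {α < κ : cf(α) = ℵ₀}`
and an `I`-positive `X ⊆ {α < κ : cf(α) = δ}` such that `E ∩ α` is non-stationary
in `α` for every `α ∈ X`. -/
theorem stmt13 (κ δ : Cardinal) (hreg : κ.IsRegular) (hunc : ℵ₀ < κ)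
    (hδ : Order.succ δ < κ)
    (I : Set (Set κ.ord.ToType))
    (hlower : ∀ Y ∈ I, ∀ Z : Set κ.ord.ToType, Z ⊆ Y → Z ∈ I)
    (hcomplete : ∀ S : Set (Set κ.ord.ToType), S ⊆ I → #S < κ → ⋃₀ S ∈ I)
    (hnormal : ∀ f : κ.ord.ToType → κ.ord.ToType, ∀ Y : Set κ.ord.ToType,
      Y ∉ I → (∀ a ∈ Y, f a < a) → ∃ b, {a ∈ Y | f a = b} ∉ I)
    (hpos : {a : κ.ord.ToType | cofAt a = δ} ∉ I) :
    ∃ E X : Set κ.ord.ToType,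
      E ⊆ {a | cofAt a = ℵ₀} ∧ OStat E ∧
      X ⊆ {a | cofAt a = δ} ∧ X ∉ I ∧
      ∀ a ∈ X, ∃ c, ClubBelow c a ∧ c ∩ E = ∅ :=
  stmt13_general κ δ hreg hunc hδ I hlower hcomplete hpos
end
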